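/- Let Z be a real Gaussian random variable with mean m and variance v > 0, and let K ∈ ℝ. Then E[max(Z − K, 0)] = √(v/(2π)) · exp(−(m − K)²/(2v)) + (m − K) · Φ((m − K)/√v), where Φ denotes the cumulative distribution function of the standard normal distribution. -/

import Mathlib

/-! Write `Z = m + √v X` with `X` standard normal, so that `E[(Z - K)⁺] = √v E[(X + a)⁺]` with
`a = (m - K) / √v`. On `{X > -a}` split `X + a`: since `φ' = -x φ`, the term `X` contributes
`φ(-a) = φ(a)`, and the constant `a` contributes `a P(X > -a) = a Φ(a)`. -/

open MeasureTheory ProbabilityTheory Real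
open scoped NNReal

/-- The standard normal cumulative distribution function
`Φ(x) = (1/√(2π)) ∫_{-∞}^x e^{-y²/2} dy`. -/
noncomputable def stdNormalCDF (x : ℝ) : ℝ :=
  ∫ y in Set.Iic x, (Real.sqrt (2 * Real.pi))⁻¹ * Real.exp (-(y ^ 2) / 2)

open Filter Set
open scoped Topology

lemma gaussianReal_eq_map_sqrt_mul_add (μ : ℝ) (v : ℝ≥0) :
    gaussianReal μ v = (gaussianReal 0 1).map (fun x ↦ √v * x + μ) := by
  have hscale : (gaussianReal 0 1).map (√v * ·) = gaussianReal 0 v := by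
    rw [gaussianReal_map_const_mul, mul_zero, mul_one]
    congr
    exact Real.sq_sqrt v.coe_nonneg
  have hcomp : (fun x ↦ √v * x + μ) = (· + μ) ∘ (√v * ·) := rfl
  rw [hcomp, ← Measure.map_map (by fun_prop) (by fun_prop), hscale, gaussianReal_map_add_const,
    zero_add]

lemma gaussianPDFReal_zero_one (x : ℝ) :
    gaussianPDFReal 0 1 x = (√(2 * π))⁻¹ * exp (-(x ^ 2) / 2) := by
  simp [gaussianPDFReal_def]

lemma stdNormalCDF_eq_integral_Ioi_neg (a : ℝ) :
    stdNormalCDF a = ∫ x in Ioi (-a), gaussianPDFReal 0 1 x := by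
  simp [stdNormalCDF, gaussianPDFReal_zero_one, ← integral_comp_neg_Iic]

lemma hasDerivAt_gaussianPDFReal_zero_one (x : ℝ) :
    HasDerivAt (gaussianPDFReal 0 1) (-(x * gaussianPDFReal 0 1 x)) x := by
  have hexp : HasDerivAt (fun y : ℝ ↦ -(y ^ 2) / 2) (-x) x :=
    ((hasDerivAt_pow 2 x).neg.div_const 2).congr_deriv <| by
      simp only [Nat.cast_ofNat, Nat.add_one_sub_one, pow_one]
      linarith
  simp_rw [funext gaussianPDFReal_zero_one]
  exact (hexp.exp.const_mul (√(2 * π))⁻¹).congr_deriv (by ring)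

lemma integrable_mul_gaussianPDFReal_zero_one :
    Integrable (fun x : ℝ ↦ x * gaussianPDFReal 0 1 x) := by
  simp_rw [gaussianPDFReal_zero_one, mul_left_comm _ (√(2 * π))⁻¹]
  refine Integrable.const_mul ?_ _
  convert integrable_mul_exp_neg_mul_sq (b := 1 / 2) (by norm_num) using 4
  ring

lemma integral_Ioi_mul_gaussianPDFReal_zero_one (c : ℝ) :
    ∫ x in Ioi c, x * gaussianPDFReal 0 1 x = gaussianPDFReal 0 1 c := by
  have hderiv (x : ℝ) : HasDerivAt (fun y ↦ -gaussianPDFReal 0 1 y) (x * gaussianPDFReal 0 1 x) x :=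
    (hasDerivAt_gaussianPDFReal_zero_one x).neg.congr_deriv (neg_neg _)
  have hlim : Tendsto (fun y ↦ -gaussianPDFReal 0 1 y) atTop (𝓝 0) :=
    tendsto_zero_of_hasDerivAt_of_integrableOn_Ioi (a := c) (fun x _ ↦ hderiv x)
      integrable_mul_gaussianPDFReal_zero_one.integrableOn
      (integrable_gaussianPDFReal 0 1).neg.integrableOn
  rw [integral_Ioi_of_hasDerivAt_of_tendsto' (fun x _ ↦ hderiv x)
    integrable_mul_gaussianPDFReal_zero_one.integrableOn hlim]
  ring

lemma integral_gaussianPDFReal_zero_one_mul_max (a : ℝ) :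
    ∫ x, gaussianPDFReal 0 1 x * max (x + a) 0
      = gaussianPDFReal 0 1 a + a * stdNormalCDF a := by
  have hpos : (fun x ↦ gaussianPDFReal 0 1 x * max (x + a) 0)
      = (Ioi (-a)).indicator (fun x ↦ x * gaussianPDFReal 0 1 x + a * gaussianPDFReal 0 1 x) := by
    ext x
    by_cases hx : -a < x
    · rw [indicator_of_mem (show x ∈ Ioi (-a) from hx), max_eq_left (by linarith)]
      ring
    · rw [indicator_of_notMem (show x ∉ Ioi (-a) from hx), max_eq_right (by linarith), mul_zero]
  rw [hpos, integral_indicator measurableSet_Ioi, integral_add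
    integrable_mul_gaussianPDFReal_zero_one.integrableOn
    ((integrable_gaussianPDFReal 0 1).const_mul a).integrableOn, integral_const_mul,
    integral_Ioi_mul_gaussianPDFReal_zero_one, ← stdNormalCDF_eq_integral_Ioi_neg]
  simp [gaussianPDFReal_zero_one]

lemma integral_max_sub_gaussianReal (m K : ℝ) {v : ℝ≥0} (hv : 0 < v) :
    ∫ x, max (x - K) 0 ∂gaussianReal m v
      = √v * (gaussianPDFReal 0 1 ((m - K) / √v)
        + (m - K) / √v * stdNormalCDF ((m - K) / √v)) := by
  have hs : 0 < √(v : ℝ) := Real.sqrt_pos.mpr hv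
  have hcont : Continuous (fun x : ℝ ↦ max (x - K) 0) := by fun_prop
  have hstd (x : ℝ) : max (√v * x + m - K) 0 = √v * max (x + (m - K) / √v) 0 := by
    rw [mul_max_of_nonneg _ _ hs.le, mul_zero, mul_add, mul_div_cancel₀ _ hs.ne']
    ring_nf
  rw [gaussianReal_eq_map_sqrt_mul_add, integral_map (by fun_prop) hcont.aestronglyMeasurable,
    integral_gaussianReal_eq_integral_smul one_ne_zero,
    ← integral_gaussianPDFReal_zero_one_mul_max, ← integral_const_mul]
  congr 1 with x
  rw [smul_eq_mul, hstd]
  ring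

theorem gaussian_call_price_general
    {Ω : Type*} [MeasurableSpace Ω] (μ : Measure Ω)
    (Z : Ω → ℝ) (m : ℝ) (v : ℝ≥0) (hv : 0 < v)
    (hZ : μ.map Z = gaussianReal m v) (K : ℝ) :
    ∫ ω, max (Z ω - K) 0 ∂μ
      = Real.sqrt (v / (2 * Real.pi)) * Real.exp (-((m - K) ^ 2) / (2 * v))
        + (m - K) * stdNormalCDF ((m - K) / Real.sqrt v) := by
  have hZ_meas : AEMeasurable Z μ := aemeasurable_of_map_neZero (by rw [hZ]; infer_instance)
  have hcont : Continuous (fun z : ℝ ↦ max (z - K) 0) := by fun_prop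
  have hs : √(v : ℝ) ≠ 0 := (Real.sqrt_pos.mpr hv).ne'
  have hexponent : -(((m - K) / √v) ^ 2) / 2 = -((m - K) ^ 2) / (2 * v) := by
    rw [div_pow, Real.sq_sqrt v.coe_nonneg]
    ring
  have hscale : √v * (√(2 * π))⁻¹ = √(v / (2 * π)) := by
    rw [Real.sqrt_div v.coe_nonneg, div_eq_mul_inv]
  rw [← integral_map hZ_meas hcont.aestronglyMeasurable, hZ,
    integral_max_sub_gaussianReal m K hv, mul_add, gaussianPDFReal_zero_one, ← mul_assoc, hscale,
    hexponent, ← mul_assoc, mul_div_cancel₀ _ hs]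

/-- If `Z` is Gaussian with mean `m` and variance `v > 0`, then
`E[max(Z - K, 0)] = √(v/(2π)) exp(-(m-K)²/(2v)) + (m-K) Φ((m-K)/√v)`. -/
theorem gaussian_call_price
    {Ω : Type*} [MeasurableSpace Ω] (μ : Measure Ω) [IsProbabilityMeasure μ]
    (Z : Ω → ℝ) (m : ℝ) (v : ℝ≥0) (hv : 0 < v)
    (hZ : μ.map Z = gaussianReal m v) (K : ℝ) :
    ∫ ω, max (Z ω - K) 0 ∂μ
      = Real.sqrt (v / (2 * Real.pi)) * Real.exp (-((m - K) ^ 2) / (2 * v))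
        + (m - K) * stdNormalCDF ((m - K) / Real.sqrt v) :=
  gaussian_call_price_general μ Z m v hv hZ K
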